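/- Let 1 < p ≤ ∞. There is a constant C = C(p) such that for all f ∈ L_p[−1,1] and all t > 0, K_{2,φ}(f, t²)_p ≤ C K_2(f, (d/dx)(1−x²)(d/dx), t²)_p, where K_2(f, (d/dx)(1−x²)(d/dx), t²)_p = inf{‖f − g‖_{L_p[−1,1]} + t² ‖((1−x²)g′(x))′‖_{L_p[−1,1]}}, the infimum over all g with g and (1−x²)g′ locally absolutely continuous on (−1,1) and ((1−x²)g′)′ ∈ L_p[−1,1]. -/

import Mathlib

/-!
On `[-1, 1]` we have `φ² g″ = ((1 - x²) g′)′ + 2x g′`, so it suffices to bound `‖g′‖_p` by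
`‖((1 - x²) g′)′‖_p`. Since `(1 - x²) g′` vanishes at `-1`, for `-1 < x ≤ 0` we get
`(1 + x) |g′(x)| ≤ (1 - x²) |g′(x)| ≤ ∫_{-1}^x |((1 - t²) g′)′|`, so on `[-1, 0]` the function
`|g′|` is dominated by averages over `[-1, x]`, which Hardy's inequality bounds in `L_p` for
`p > 1`. The half `[0, 1]` follows by the reflection `x ↦ -x`, which commutes with
`g ↦ ((1 - x²) g′)′`.
-/

open MeasureTheory Set ENNReal NNReal

noncomputable section

/-- `φ(x) = √(1 - x²)`. -/
def phi (x : ℝ) : ℝ := Real.sqrt (1 - x ^ 2)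

/-- The symmetric difference `Δ^r_{hφ} f(x)`, set to `0` when the interval
`[x - (r/2)hφ(x), x + (r/2)hφ(x)]` is not contained in `[-1,1]`. -/
def symmDiffPhi (r : ℕ) (h : ℝ) (f : ℝ → ℝ) (x : ℝ) : ℝ :=
  if x - (r : ℝ) / 2 * h * phi x ∈ Icc (-1 : ℝ) 1 ∧
      x + (r : ℝ) / 2 * h * phi x ∈ Icc (-1 : ℝ) 1 then
    ∑ k ∈ Finset.range (r + 1),
      (-1 : ℝ) ^ k * (r.choose k : ℝ) * f (x + ((r : ℝ) / 2 - (k : ℝ)) * h * phi x)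
  else 0

/-- The `L_p` (quasi-)norm on `[-1,1]`, valued in `ℝ≥0∞`. -/
def lpI (p : ℝ≥0∞) (g : ℝ → ℝ) : ℝ≥0∞ :=
  eLpNorm g p (volume.restrict (Icc (-1 : ℝ) 1))

/-- The Ditzian–Totik modulus of smoothness `ω_φ^r(f,t)_p`. -/
def omegaPhi (r : ℕ) (f : ℝ → ℝ) (t : ℝ) (p : ℝ≥0∞) : ℝ≥0∞ :=
  ⨆ (h : ℝ) (_ : 0 < |h| ∧ |h| ≤ t), lpI p (symmDiffPhi r h f)

/-- Best approximation `E_n(f)_p` by algebraic polynomials of degree `< n`. -/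
def bestE (n : ℕ) (f : ℝ → ℝ) (p : ℝ≥0∞) : ℝ≥0∞ :=
  ⨅ (P : Polynomial ℝ) (_ : P.degree < (n : ℕ)), lpI p fun x => f x - P.eval x

/-- The Ditzian–Totik `K`-functional
`K_{r,φ}(f, s)_p = inf_g (‖f - g‖_p + s ‖φ^r g^{(r)}‖_p)`. -/
def KfuncPhi (r : ℕ) (f : ℝ → ℝ) (s : ℝ) (p : ℝ≥0∞) : ℝ≥0∞ :=
  ⨅ (g : ℝ → ℝ) (_ : ContDiff ℝ r g),
    lpI p (fun x => f x - g x) +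
      ENNReal.ofReal s * lpI p fun x => phi x ^ r * iteratedDeriv r g x

/-- The Legendre differential expression `g ↦ ((1 - x²) g′)′`. -/
def legendreD (g : ℝ → ℝ) : ℝ → ℝ :=
  deriv fun x => (1 - x ^ 2) * deriv g x

/-- The `K`-functional `K₂(f, (d/dx)(1-x²)(d/dx), s)_p`. -/
def Kfunc2Legendre (f : ℝ → ℝ) (s : ℝ) (p : ℝ≥0∞) : ℝ≥0∞ :=
  ⨅ (g : ℝ → ℝ) (_ : ContDiff ℝ 2 g),
    lpI p (fun x => f x - g x) + ENNReal.ofReal s * lpI p (legendreD g)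

section Hardy

variable {a b q : ℝ} {u v : ℝ → ℝ}

lemma lintegral_Ioc_sub_rpow {x y r : ℝ} (hax : a ≤ x) (hxy : x ≤ y)
    (hr : -1 < r ∨ r ≠ -1 ∧ a < x) :
    ∫⁻ t in Ioc x y, ENNReal.ofReal ((t - a) ^ r)
      = ENNReal.ofReal (((y - a) ^ (r + 1) - (x - a) ^ (r + 1)) / (r + 1)) := by
  have hint : IntervalIntegrable (fun t => (t - a) ^ r) volume x y := by
    rcases hr with hr | ⟨-, hax⟩
    · simpa using (intervalIntegral.intervalIntegrable_rpow' (a := x - a) (b := y - a) hr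
        ).comp_sub_right a
    · refine ContinuousOn.intervalIntegrable (ContinuousOn.rpow_const (by fun_prop) ?_)
      intro t ht
      rw [uIcc_of_le hxy] at ht
      exact Or.inl (by linarith [ht.1])
  have hr' : -1 < r ∨ r ≠ -1 ∧ (0 : ℝ) ∉ uIcc (x - a) (y - a) := by
    refine hr.imp_right fun ⟨hr, hax⟩ => ⟨hr, fun h0 => ?_⟩
    rw [uIcc_of_le (by linarith)] at h0
    linarith [h0.1]
  rw [← ofReal_integral_eq_lintegral_ofReal
      ((intervalIntegrable_iff_integrableOn_Ioc_of_le hxy).mp hint),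
    ← intervalIntegral.integral_of_le hxy, intervalIntegral.integral_comp_sub_right
      (fun t => t ^ r), integral_rpow hr']
  filter_upwards [ae_restrict_mem measurableSet_Ioc] with t ht
  exact Real.rpow_nonneg (by linarith [ht.1]) r

lemma lintegral_Ioc_sub_rpow_neg_half {x : ℝ} (hax : a ≤ x) :
    ∫⁻ t in Ioc a x, ENNReal.ofReal ((t - a) ^ (-(1 / 2) : ℝ))
      = ENNReal.ofReal (2 * (x - a) ^ (1 / 2 : ℝ)) := by
  rw [lintegral_Ioc_sub_rpow le_rfl hax (Or.inl (by norm_num)), sub_self,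
    show (-(1 / 2) + 1 : ℝ) = 1 / 2 by norm_num, Real.zero_rpow (by norm_num)]
  ring_nf

/-- Hölder's inequality with the weight `(t - a) ^ (±(q - 1) / 2q)` split between the factors. -/
lemma lintegral_Ioc_rpow_le_weighted (hq : 1 < q) {Λ : ℝ → ℝ≥0∞} (hΛ : Measurable Λ) {x : ℝ}
    (hax : a ≤ x) :
    (∫⁻ t in Ioc a x, Λ t) ^ q ≤ ENNReal.ofReal (2 ^ (q - 1) * (x - a) ^ ((q - 1) / 2)) *
      ∫⁻ t in Ioc a x, Λ t ^ q * ENNReal.ofReal ((t - a) ^ ((q - 1) / 2)) := by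
  have hq0 : 0 < q := by linarith
  set V : ℝ → ℝ≥0∞ := fun t => Λ t ^ q * ENNReal.ofReal ((t - a) ^ ((q - 1) / 2))
  set w : ℝ → ℝ≥0∞ := fun t => ENNReal.ofReal ((t - a) ^ (-(1 / 2) : ℝ))
  have hsplit : ∀ t ∈ Ioc a x, Λ t = V t ^ (1 / q) * w t ^ (1 - 1 / q) := by
    intro t ht
    have hta : 0 < t - a := by linarith [ht.1]
    simp only [V, w]
    rw [ENNReal.mul_rpow_of_nonneg _ _ (by positivity), ← ENNReal.rpow_mul,
      mul_one_div_cancel hq0.ne', ENNReal.rpow_one, mul_assoc,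
      ENNReal.ofReal_rpow_of_pos (Real.rpow_pos_of_pos hta _),
      ENNReal.ofReal_rpow_of_pos (Real.rpow_pos_of_pos hta _), ← ENNReal.ofReal_mul (by positivity),
      ← Real.rpow_mul hta.le, ← Real.rpow_mul hta.le, ← Real.rpow_add hta]
    field_simp
    norm_num
  have holder : ∫⁻ t in Ioc a x, Λ t ≤ (∫⁻ t in Ioc a x, V t) ^ (1 / q) *
      (∫⁻ t in Ioc a x, w t) ^ (1 - 1 / q) := by
    rw [setLIntegral_congr_fun measurableSet_Ioc hsplit]
    exact ENNReal.lintegral_mul_norm_pow_le (by fun_prop) (by fun_prop) (by positivity)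
      (by rw [sub_nonneg, div_le_one hq0]; exact hq.le) (by ring)
  calc (∫⁻ t in Ioc a x, Λ t) ^ q
      ≤ ((∫⁻ t in Ioc a x, V t) ^ (1 / q) * (∫⁻ t in Ioc a x, w t) ^ (1 - 1 / q)) ^ q := by
        gcongr
    _ = (∫⁻ t in Ioc a x, w t) ^ (q - 1) * ∫⁻ t in Ioc a x, V t := by
        rw [ENNReal.mul_rpow_of_nonneg _ _ hq0.le, ← ENNReal.rpow_mul, ← ENNReal.rpow_mul,
          one_div_mul_cancel hq0.ne', ENNReal.rpow_one, sub_mul, one_div_mul_cancel hq0.ne',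
          one_mul, mul_comm]
    _ = _ := by
        rw [lintegral_Ioc_sub_rpow_neg_half hax, ENNReal.ofReal_rpow_of_nonneg (by positivity)
          (by linarith), Real.mul_rpow (by norm_num) (by positivity), ← Real.rpow_mul (by linarith)]
        ring_nf

lemma lintegral_Ioc_mul_lintegral_Ioc_swap {W V : ℝ → ℝ≥0∞} (hW : Measurable W)
    (hV : Measurable V) :
    ∫⁻ x in Ioc a b, W x * ∫⁻ t in Ioc a x, V t
      = ∫⁻ t in Ioc a b, (∫⁻ x in Icc t b, W x) * V t := by
  set F : ℝ → ℝ → ℝ≥0∞ := fun x t => if t ≤ x then W x * V t else 0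
  have hF : Measurable (Function.uncurry F) :=
    Measurable.ite (measurableSet_le measurable_snd measurable_fst)
      ((hW.comp measurable_fst).mul (hV.comp measurable_snd)) measurable_const
  have hx : ∀ x ∈ Ioc a b, W x * ∫⁻ t in Ioc a x, V t = ∫⁻ t in Ioc a b, F x t := by
    intro x hx
    have hFx : F x = (Iic x).indicator fun t => W x * V t := by
      ext t; simp [F, indicator]
    rw [hFx, lintegral_indicator measurableSet_Iic, Measure.restrict_restrict measurableSet_Iic,
      Iic_inter_Ioc_of_le hx.2, lintegral_const_mul _ hV]
  have ht : ∀ t ∈ Ioc a b, ∫⁻ x in Ioc a b, F x t = (∫⁻ x in Icc t b, W x) * V t := by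
    intro t ht
    have hFt : (F · t) = (Ici t).indicator fun x => W x * V t := by
      ext x; simp [F, indicator]
    have hset : Ici t ∩ Ioc a b = Icc t b := by
      ext x
      simp only [mem_inter_iff, mem_Ici, mem_Ioc, mem_Icc]
      exact ⟨fun h => ⟨h.1, h.2.2⟩, fun h => ⟨h.1, ht.1.trans_le h.1, h.2⟩⟩
    rw [hFt, lintegral_indicator measurableSet_Ici, Measure.restrict_restrict measurableSet_Ici,
      hset, lintegral_mul_const _ hW]
  calc ∫⁻ x in Ioc a b, W x * ∫⁻ t in Ioc a x, V t
      = ∫⁻ x in Ioc a b, ∫⁻ t in Ioc a b, F x t := setLIntegral_congr_fun measurableSet_Ioc hx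
    _ = ∫⁻ t in Ioc a b, ∫⁻ x in Ioc a b, F x t := lintegral_lintegral_swap hF.aemeasurable
    _ = ∫⁻ t in Ioc a b, (∫⁻ x in Icc t b, W x) * V t := setLIntegral_congr_fun measurableSet_Ioc ht

lemma lintegral_Icc_sub_rpow_le (hq : 1 < q) {t : ℝ} (hat : a < t) (htb : t ≤ b) :
    ∫⁻ x in Icc t b, ENNReal.ofReal ((x - a) ^ (-(q + 1) / 2))
      ≤ ENNReal.ofReal (2 / (q - 1) * (t - a) ^ ((1 - q) / 2)) := by
  have hr : -(q + 1) / 2 + 1 = (1 - q) / 2 := by ring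
  rw [← setLIntegral_congr Ioc_ae_eq_Icc,
    lintegral_Ioc_sub_rpow hat.le htb (Or.inr ⟨by linarith, hat⟩), hr]
  refine ENNReal.ofReal_le_ofReal ?_
  have hb : 0 ≤ (b - a) ^ ((1 - q) / 2) := Real.rpow_nonneg (by linarith) _
  have hX : 2 / (q - 1) * (t - a) ^ ((1 - q) / 2) * ((1 - q) / 2) = -(t - a) ^ ((1 - q) / 2) := by
    have : q - 1 ≠ 0 := by linarith
    field_simp
    ring
  rw [div_le_iff_of_neg (by linarith), hX]
  linarith

/-- Hardy's inequality; the constant `2 ^ q / (q - 1)` is not the sharp one. -/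
theorem lintegral_Ioc_average_rpow_le (hq : 1 < q) {Λ : ℝ → ℝ≥0∞} (hΛ : Measurable Λ) :
    ∫⁻ x in Ioc a b, ((ENNReal.ofReal (x - a))⁻¹ * ∫⁻ t in Ioc a x, Λ t) ^ q
      ≤ ENNReal.ofReal (2 ^ q / (q - 1)) * ∫⁻ t in Ioc a b, Λ t ^ q := by
  have hq0 : 0 < q := by linarith
  set W : ℝ → ℝ≥0∞ := fun x => ENNReal.ofReal ((x - a) ^ (-(q + 1) / 2))
  set V : ℝ → ℝ≥0∞ := fun t => Λ t ^ q * ENNReal.ofReal ((t - a) ^ ((q - 1) / 2))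
  have hW : ∀ x ∈ Ioc a b, ((ENNReal.ofReal (x - a))⁻¹ * ∫⁻ t in Ioc a x, Λ t) ^ q
      ≤ ENNReal.ofReal (2 ^ (q - 1)) * (W x * ∫⁻ t in Ioc a x, V t) := by
    intro x hx
    have hxa : 0 < x - a := by linarith [hx.1]
    have hexp : (x - a) ^ (-q) * (2 ^ (q - 1) * (x - a) ^ ((q - 1) / 2))
        = 2 ^ (q - 1) * (x - a) ^ (-(q + 1) / 2) := by
      rw [show -(q + 1) / 2 = -q + (q - 1) / 2 by ring, Real.rpow_add hxa]
      ring
    calc ((ENNReal.ofReal (x - a))⁻¹ * ∫⁻ t in Ioc a x, Λ t) ^ q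
        = ENNReal.ofReal ((x - a) ^ (-q)) * (∫⁻ t in Ioc a x, Λ t) ^ q := by
          rw [ENNReal.mul_rpow_of_nonneg _ _ hq0.le, ENNReal.inv_rpow,
            ENNReal.ofReal_rpow_of_pos hxa, Real.rpow_neg hxa.le,
            ENNReal.ofReal_inv_of_pos (by positivity)]
      _ ≤ ENNReal.ofReal ((x - a) ^ (-q)) * (ENNReal.ofReal (2 ^ (q - 1) *
            (x - a) ^ ((q - 1) / 2)) * ∫⁻ t in Ioc a x, V t) := by
          gcongr
          exact lintegral_Ioc_rpow_le_weighted hq hΛ hx.1.le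
      _ = ENNReal.ofReal (2 ^ (q - 1)) * (W x * ∫⁻ t in Ioc a x, V t) := by
          rw [← mul_assoc, ← ENNReal.ofReal_mul (by positivity), hexp,
            ENNReal.ofReal_mul (by positivity), mul_assoc]
  have hV : ∀ t ∈ Ioc a b,
      (∫⁻ x in Icc t b, W x) * V t ≤ ENNReal.ofReal (2 / (q - 1)) * Λ t ^ q := by
    intro t ht
    have hta : 0 < t - a := by linarith [ht.1]
    calc (∫⁻ x in Icc t b, W x) * V t
        ≤ ENNReal.ofReal (2 / (q - 1) * (t - a) ^ ((1 - q) / 2)) * V t := by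
          gcongr
          exact lintegral_Icc_sub_rpow_le hq ht.1 ht.2
      _ = ENNReal.ofReal (2 / (q - 1)) * Λ t ^ q := by
          rw [mul_left_comm, ← ENNReal.ofReal_mul (by positivity), mul_assoc, ← Real.rpow_add hta,
            show (1 - q) / 2 + (q - 1) / 2 = 0 by ring, Real.rpow_zero, mul_one, mul_comm]
  calc ∫⁻ x in Ioc a b, ((ENNReal.ofReal (x - a))⁻¹ * ∫⁻ t in Ioc a x, Λ t) ^ q
      ≤ ∫⁻ x in Ioc a b, ENNReal.ofReal (2 ^ (q - 1)) * (W x * ∫⁻ t in Ioc a x, V t) :=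
        setLIntegral_mono' measurableSet_Ioc hW
    _ = ENNReal.ofReal (2 ^ (q - 1)) * ∫⁻ t in Ioc a b, (∫⁻ x in Icc t b, W x) * V t := by
        rw [lintegral_const_mul' _ _ ENNReal.ofReal_ne_top,
          lintegral_Ioc_mul_lintegral_Ioc_swap (by fun_prop) (by fun_prop)]
    _ ≤ ENNReal.ofReal (2 ^ (q - 1)) * ∫⁻ t in Ioc a b, ENNReal.ofReal (2 / (q - 1)) * Λ t ^ q := by
        gcongr ENNReal.ofReal _ * ?_
        exact setLIntegral_mono' measurableSet_Ioc hV
    _ = ENNReal.ofReal (2 ^ q / (q - 1)) * ∫⁻ t in Ioc a b, Λ t ^ q := by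
        rw [lintegral_const_mul' _ _ ENNReal.ofReal_ne_top, ← mul_assoc,
          ← ENNReal.ofReal_mul (by positivity), mul_div_assoc', ← Real.rpow_add_one (by norm_num),
          sub_add_cancel]

def hardyConst (p : ℝ≥0∞) : ℝ≥0 :=
  if p = ∞ then 1 else Real.toNNReal (2 ^ p.toReal / (p.toReal - 1)) ^ (1 / p.toReal)

lemma eLpNorm_Ioc_le_of_mul_enorm_le {p : ℝ≥0∞} (hp : 1 < p) (hp_top : p ≠ ∞)
    (hv : Measurable v)
    (huv : ∀ x ∈ Ioc a b, ENNReal.ofReal (x - a) * ‖u x‖ₑ ≤ ∫⁻ t in Ioc a x, ‖v t‖ₑ) :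
    eLpNorm u p (volume.restrict (Ioc a b))
      ≤ ENNReal.ofReal (2 ^ p.toReal / (p.toReal - 1)) ^ (1 / p.toReal) *
        eLpNorm v p (volume.restrict (Ioc a b)) := by
  have hq : 1 < p.toReal := by
    simpa using ENNReal.toReal_strict_mono hp_top hp
  have hp0 : p ≠ 0 := (zero_lt_one.trans hp).ne'
  have hu : ∀ x ∈ Ioc a b, ‖u x‖ₑ ^ p.toReal
      ≤ ((ENNReal.ofReal (x - a))⁻¹ * ∫⁻ t in Ioc a x, ‖v t‖ₑ) ^ p.toReal := by
    intro x hx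
    gcongr
    rw [← ENNReal.mul_le_iff_le_inv (by simpa using hx.1) ENNReal.ofReal_ne_top]
    exact huv x hx
  rw [eLpNorm_eq_lintegral_rpow_enorm_toReal hp0 hp_top,
    eLpNorm_eq_lintegral_rpow_enorm_toReal hp0 hp_top,
    ← ENNReal.mul_rpow_of_nonneg _ _ (by positivity)]
  gcongr
  exact (setLIntegral_mono' measurableSet_Ioc hu).trans
    (lintegral_Ioc_average_rpow_le hq hv.enorm)

lemma eLpNorm_top_Ioc_le_of_mul_enorm_le
    (huv : ∀ x ∈ Ioc a b, ENNReal.ofReal (x - a) * ‖u x‖ₑ ≤ ∫⁻ t in Ioc a x, ‖v t‖ₑ) :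
    eLpNorm u ∞ (volume.restrict (Ioc a b)) ≤ eLpNorm v ∞ (volume.restrict (Ioc a b)) := by
  rw [eLpNorm_exponent_top, eLpNorm_exponent_top]
  set M := eLpNormEssSup v (volume.restrict (Ioc a b))
  refine eLpNormEssSup_le_of_ae_enorm_bound ?_
  filter_upwards [ae_restrict_mem measurableSet_Ioc] with x hx
  have hxa : ENNReal.ofReal (x - a) ≠ 0 := by simpa using hx.1
  have hv : ∀ᵐ t ∂volume.restrict (Ioc a x), ‖v t‖ₑ ≤ M :=
    ae_restrict_of_ae_restrict_of_subset (Ioc_subset_Ioc_right hx.2)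
      ae_le_eLpNormEssSup
  rw [← ENNReal.mul_le_mul_iff_right hxa ENNReal.ofReal_ne_top]
  calc ENNReal.ofReal (x - a) * ‖u x‖ₑ
      ≤ ∫⁻ t in Ioc a x, ‖v t‖ₑ := huv x hx
    _ ≤ ∫⁻ _ in Ioc a x, M := lintegral_mono_ae hv
    _ = ENNReal.ofReal (x - a) * M := by rw [setLIntegral_const, Real.volume_Ioc, mul_comm]

theorem eLpNorm_Ioc_le_hardyConst_mul {p : ℝ≥0∞} (hp : 1 < p) (hv : Measurable v)
    (huv : ∀ x ∈ Ioc a b, ENNReal.ofReal (x - a) * ‖u x‖ₑ ≤ ∫⁻ t in Ioc a x, ‖v t‖ₑ) :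
    eLpNorm u p (volume.restrict (Ioc a b))
      ≤ hardyConst p * eLpNorm v p (volume.restrict (Ioc a b)) := by
  rw [hardyConst]
  split_ifs with hp_top
  · subst hp_top
    simpa using eLpNorm_top_Ioc_le_of_mul_enorm_le huv
  · rw [ENNReal.coe_rpow_of_nonneg _ (by positivity)]
    exact eLpNorm_Ioc_le_of_mul_enorm_le hp hp_top hv huv

end Hardy

lemma eLpNorm_restrict_neg {E : Type*} [NormedAddCommGroup E] {p : ℝ≥0∞} (f : ℝ → E)
    (s : Set ℝ) :
    eLpNorm f p (volume.restrict (-s)) = eLpNorm (fun x => f (-x)) p (volume.restrict s) := by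
  have h := (Measure.measurePreserving_neg (volume : Measure ℝ)).restrict_preimage_emb
    (MeasurableEquiv.neg ℝ).measurableEmbedding (-s)
  rw [← h.map_eq, show Neg.neg ⁻¹' (-s) = s from neg_neg s]
  exact (MeasurableEquiv.neg ℝ).measurableEmbedding.eLpNorm_map_measure

lemma lpI_comp_neg {p : ℝ≥0∞} (f : ℝ → ℝ) : lpI p (fun x => f (-x)) = lpI p f := by
  rw [lpI, lpI, ← eLpNorm_restrict_neg, neg_Icc, neg_neg]

lemma eLpNorm_le_restrict_add_restrict_compl {α E : Type*} [MeasurableSpace α]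
    [NormedAddCommGroup E] {μ : Measure α} {p : ℝ≥0∞} {f : α → E} {s : Set α}
    (hp : 1 ≤ p) (hs : MeasurableSet s) (hf : AEStronglyMeasurable f μ) :
    eLpNorm f p μ ≤ eLpNorm f p (μ.restrict s) + eLpNorm f p (μ.restrict sᶜ) := by
  conv_lhs => rw [← s.indicator_self_add_compl f]
  rw [← eLpNorm_indicator_eq_eLpNorm_restrict hs,
    ← eLpNorm_indicator_eq_eLpNorm_restrict hs.compl]
  exact eLpNorm_add_le (hf.indicator hs) (hf.indicator hs.compl) hp

section Legendre

variable {p : ℝ≥0∞} {g : ℝ → ℝ}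

lemma contDiff_one_sub_sq_mul_deriv (hg : ContDiff ℝ 2 g) :
    ContDiff ℝ 1 fun x => (1 - x ^ 2) * deriv g x :=
  (contDiff_const.sub (contDiff_id.pow 2)).mul (hg.iterate_deriv' 1 1)

lemma continuous_legendreD (hg : ContDiff ℝ 2 g) : Continuous (legendreD g) :=
  (contDiff_one_sub_sq_mul_deriv hg).continuous_deriv le_rfl

lemma one_sub_sq_mul_deriv_eq_integral (hg : ContDiff ℝ 2 g) (x : ℝ) :
    (1 - x ^ 2) * deriv g x = ∫ t in (-1)..x, legendreD g t := by
  rw [legendreD, intervalIntegral.integral_deriv_eq_sub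
    (fun t _ => ((contDiff_one_sub_sq_mul_deriv hg).differentiable one_ne_zero).differentiableAt)
    ((continuous_legendreD hg).intervalIntegrable _ _)]
  ring

lemma ofReal_mul_enorm_deriv_le_lintegral (hg : ContDiff ℝ 2 g) {x : ℝ} (hx : x ∈ Ioc (-1) 0) :
    ENNReal.ofReal (x - -1) * ‖deriv g x‖ₑ ≤ ∫⁻ t in Ioc (-1) x, ‖legendreD g t‖ₑ := by
  obtain ⟨hx1, hx0⟩ := hx
  calc ENNReal.ofReal (x - -1) * ‖deriv g x‖ₑ ≤ ENNReal.ofReal (1 - x ^ 2) * ‖deriv g x‖ₑ := by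
        gcongr ?_ * _
        exact ENNReal.ofReal_le_ofReal (by nlinarith)
    _ = ‖(1 - x ^ 2) * deriv g x‖ₑ := by
        rw [enorm_mul, Real.enorm_of_nonneg (r := 1 - x ^ 2) (by nlinarith)]
    _ = ‖∫ t in Ioc (-1) x, legendreD g t‖ₑ := by
        rw [one_sub_sq_mul_deriv_eq_integral hg, intervalIntegral.integral_of_le hx1.le]
    _ ≤ ∫⁻ t in Ioc (-1) x, ‖legendreD g t‖ₑ := enorm_integral_le_lintegral_enorm _

lemma legendreD_comp_neg (g : ℝ → ℝ) :
    legendreD (fun x => g (-x)) = fun x => legendreD g (-x) := by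
  have h : (fun x : ℝ => (1 - x ^ 2) * deriv (fun y => g (-y)) x)
      = fun x => -((fun y : ℝ => (1 - y ^ 2) * deriv g y) (-x)) := by
    funext x
    rw [deriv_comp_neg]
    ring
  funext x
  rw [legendreD, h, deriv.fun_neg, deriv_comp_neg (f := fun y => (1 - y ^ 2) * deriv g y), neg_neg,
    legendreD]

lemma eLpNorm_deriv_Icc_neg_one_zero_le (hp : 1 < p) (hg : ContDiff ℝ 2 g) :
    eLpNorm (deriv g) p (volume.restrict (Icc (-1) 0)) ≤ hardyConst p * lpI p (legendreD g) := by
  rw [← Measure.restrict_congr_set Ioc_ae_eq_Icc]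
  refine (eLpNorm_Ioc_le_hardyConst_mul hp (continuous_legendreD hg).measurable
    fun x hx => ofReal_mul_enorm_deriv_le_lintegral hg hx).trans ?_
  gcongr
  exact eLpNorm_mono_measure _ (Measure.restrict_mono (Ioc_subset_Icc_self.trans
    (Icc_subset_Icc_right zero_le_one)) le_rfl)

lemma eLpNorm_deriv_Ioc_zero_one_le (hp : 1 < p) (hg : ContDiff ℝ 2 g) :
    eLpNorm (deriv g) p (volume.restrict (Ioc 0 1)) ≤ hardyConst p * lpI p (legendreD g) := by
  have hd : deriv (fun x => g (-x)) = fun x => -deriv g (-x) := funext (deriv_comp_neg g)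
  calc eLpNorm (deriv g) p (volume.restrict (Ioc 0 1))
      = eLpNorm (deriv fun x => g (-x)) p (volume.restrict (Ico (-1) 0)) := by
        rw [← neg_neg (Ioc (0 : ℝ) 1), neg_Ioc, neg_zero, eLpNorm_restrict_neg, hd]
        exact (eLpNorm_neg (fun x => deriv g (-x)) p _).symm
    _ ≤ eLpNorm (deriv fun x => g (-x)) p (volume.restrict (Icc (-1) 0)) :=
        eLpNorm_mono_measure _ (Measure.restrict_mono Ico_subset_Icc_self le_rfl)
    _ ≤ hardyConst p * lpI p (legendreD g) := by
        refine (eLpNorm_deriv_Icc_neg_one_zero_le (g := fun x => g (-x)) hp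
          (hg.comp contDiff_neg)).trans_eq ?_
        rw [legendreD_comp_neg, lpI_comp_neg]

theorem lpI_deriv_le_mul_lpI_legendreD (hp : 1 < p) (hg : ContDiff ℝ 2 g) :
    lpI p (deriv g) ≤ (2 * hardyConst p : ℝ≥0) * lpI p (legendreD g) := by
  have hleft : Iic 0 ∩ Icc (-1 : ℝ) 1 = Icc (-1) 0 := by
    ext x
    simp only [mem_inter_iff, mem_Iic, mem_Icc]
    grind
  have hright : (Iic 0)ᶜ ∩ Icc (-1 : ℝ) 1 = Ioc 0 1 := by
    ext x
    simp only [mem_inter_iff, mem_compl_iff, mem_Iic, mem_Icc, mem_Ioc]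
    grind
  calc lpI p (deriv g)
      ≤ eLpNorm (deriv g) p (volume.restrict (Icc (-1) 0))
        + eLpNorm (deriv g) p (volume.restrict (Ioc 0 1)) := by
        rw [← hleft, ← hright, ← Measure.restrict_restrict measurableSet_Iic,
          ← Measure.restrict_restrict measurableSet_Iic.compl]
        exact eLpNorm_le_restrict_add_restrict_compl hp.le measurableSet_Iic
          (hg.continuous_deriv one_le_two).aestronglyMeasurable
    _ ≤ hardyConst p * lpI p (legendreD g) + hardyConst p * lpI p (legendreD g) := by
        gcongr
        exacts [eLpNorm_deriv_Icc_neg_one_zero_le hp hg, eLpNorm_deriv_Ioc_zero_one_le hp hg]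
    _ = (2 * hardyConst p : ℝ≥0) * lpI p (legendreD g) := by push_cast; ring

lemma phi_sq_mul_iteratedDeriv_two_eq (hg : ContDiff ℝ 2 g) {x : ℝ} (hx : x ∈ Icc (-1) 1) :
    phi x ^ 2 * iteratedDeriv 2 g x = legendreD g x + 2 * x * deriv g x := by
  have hphi : phi x ^ 2 = 1 - x ^ 2 := Real.sq_sqrt (by nlinarith [hx.1, hx.2])
  have hd : HasDerivAt (deriv g) (deriv (deriv g) x) x :=
    ((hg.iterate_deriv' 1 1).differentiable one_ne_zero).differentiableAt.hasDerivAt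
  have hL : legendreD g x = -(2 * x) * deriv g x + (1 - x ^ 2) * deriv (deriv g) x := by
    rw [legendreD, (((hasDerivAt_pow 2 x).const_sub 1).fun_mul hd).deriv]
    simp
  rw [hphi, iteratedDeriv_succ, iteratedDeriv_one, hL]
  ring

lemma lpI_phi_sq_mul_iteratedDeriv_two_le (hp : 1 ≤ p) (hg : ContDiff ℝ 2 g) :
    lpI p (fun x => phi x ^ 2 * iteratedDeriv 2 g x)
      ≤ lpI p (legendreD g) + 2 * lpI p (deriv g) := by
  have hcont : Continuous (deriv g) := hg.continuous_deriv one_le_two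
  have hx : ∀ᵐ x ∂volume.restrict (Icc (-1 : ℝ) 1), ‖2 * x * deriv g x‖ ≤ 2 * ‖deriv g x‖ := by
    filter_upwards [ae_restrict_mem measurableSet_Icc] with x hx
    rw [norm_mul, norm_mul, Real.norm_ofNat]
    gcongr
    exact mul_le_of_le_one_right zero_le_two (abs_le.mpr hx)
  calc lpI p (fun x => phi x ^ 2 * iteratedDeriv 2 g x)
      = lpI p (fun x => legendreD g x + 2 * x * deriv g x) :=
        eLpNorm_congr_ae (ae_restrict_of_forall_mem measurableSet_Icc
          fun x hx => phi_sq_mul_iteratedDeriv_two_eq hg hx)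
    _ ≤ lpI p (legendreD g) + lpI p (fun x => 2 * x * deriv g x) :=
        eLpNorm_add_le (continuous_legendreD hg).aestronglyMeasurable
          (by fun_prop) hp
    _ ≤ lpI p (legendreD g) + 2 * lpI p (deriv g) := by
        gcongr
        simpa [lpI] using eLpNorm_le_mul_eLpNorm_of_ae_le_mul hx p

lemma KfuncPhi_two_le_mul_Kfunc2Legendre {C : ℝ≥0} (hC : 1 ≤ C)
    (h : ∀ g : ℝ → ℝ, ContDiff ℝ 2 g →
      lpI p (fun x => phi x ^ 2 * iteratedDeriv 2 g x) ≤ C * lpI p (legendreD g))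
    (f : ℝ → ℝ) (s : ℝ) :
    KfuncPhi 2 f s p ≤ C * Kfunc2Legendre f s p := by
  have hC0 : (C : ℝ≥0∞) ≠ 0 := by simpa using (zero_lt_one.trans_le hC).ne'
  rw [Kfunc2Legendre, ENNReal.mul_iInf_of_ne hC0 ENNReal.coe_ne_top]
  refine le_iInf fun g => ?_
  rw [ENNReal.mul_iInf_of_ne hC0 ENNReal.coe_ne_top]
  refine le_iInf fun hg => ?_
  calc KfuncPhi 2 f s p
      ≤ lpI p (fun x => f x - g x)
        + ENNReal.ofReal s * lpI p (fun x => phi x ^ 2 * iteratedDeriv 2 g x) :=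
        iInf₂_le g hg
    _ ≤ C * lpI p (fun x => f x - g x) + ENNReal.ofReal s * (C * lpI p (legendreD g)) := by
        gcongr
        · exact le_mul_of_one_le_left' (by exact_mod_cast hC)
        · exact h g hg
    _ = C * (lpI p (fun x => f x - g x) + ENNReal.ofReal s * lpI p (legendreD g)) := by ring

end Legendre

/-- (4.2): for `1 < p ≤ ∞`,
`K_{2,φ}(f,t²)_p ≤ C K₂(f, (d/dx)(1-x²)(d/dx), t²)_p`. -/
theorem Kfunc2phi_le_Kfunc2Legendre (p : ℝ≥0∞) (hp : 1 < p) :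
    ∃ C : ℝ≥0, 0 < C ∧
      ∀ f : ℝ → ℝ, MemLp f p (volume.restrict (Icc (-1 : ℝ) 1)) →
        ∀ t : ℝ, 0 < t →
          KfuncPhi 2 f (t ^ 2) p ≤ C * Kfunc2Legendre f (t ^ 2) p := by
  set K := 2 * hardyConst p
  refine ⟨1 + 2 * K, by positivity, fun f _ t _ =>
    KfuncPhi_two_le_mul_Kfunc2Legendre le_self_add (fun g hg => ?_) f (t ^ 2)⟩
  calc lpI p (fun x => phi x ^ 2 * iteratedDeriv 2 g x)
      ≤ lpI p (legendreD g) + 2 * (K * lpI p (legendreD g)) := by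
        grw [lpI_phi_sq_mul_iteratedDeriv_two_le hp.le hg, lpI_deriv_le_mul_lpI_legendreD hp hg]
    _ = (1 + 2 * K : ℝ≥0) * lpI p (legendreD g) := by push_cast; ring
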